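/- Suppose M ∈ ΩDeep(R) and N ∈ DF(R). (1) If there exists a surjective R-module homomorphism M ↠ N, then M has a free direct summand. (2) If there exists a short exact sequence 0 → N → M → X → 0 with X ∈ Deep(R), then M has a free direct summand. -/

import Mathlib

universe u

open IsLocalRing

noncomputable def rdepth (R : Type u) [CommRing R] [IsLocalRing R]
    (M : Type u) [AddCommGroup M] [Module R M] : ℕ :=
  sSup {n : ℕ | ∃ rs : List R, rs.length = n ∧ (∀ r ∈ rs, r ∈ maximalIdeal R) ∧
    RingTheory.Sequence.IsRegular M rs}

def Deep (R : Type u) [CommRing R] [IsLocalRing R]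
    (M : Type u) [AddCommGroup M] [Module R M] : Prop :=
  Module.Finite R M ∧ rdepth R R ≤ rdepth R M

def OmegaDeep (R : Type u) [CommRing R] [IsLocalRing R]
    (M : Type u) [AddCommGroup M] [Module R M] : Prop :=
  ∃ (n : ℕ) (f : M →ₗ[R] (Fin n → R)), Function.Injective f ∧
    Deep R ((Fin n → R) ⧸ LinearMap.range f)

def DF (R : Type u) [CommRing R] [IsLocalRing R]
    (M : Type u) [AddCommGroup M] [Module R M] : Prop :=
  ∃ (n : ℕ) (f : R →ₗ[R] (Fin n → M)), Function.Injective f ∧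
    Deep R ((Fin n → M) ⧸ LinearMap.range f)

def HasFreeSummand (R : Type u) [CommRing R] (M : Type u) [AddCommGroup M] [Module R M] : Prop :=
  ∃ (p : M →ₗ[R] R) (s : R →ₗ[R] M), p.comp s = LinearMap.id

noncomputable def mu (R : Type u) [CommRing R] (M : Type u) [AddCommGroup M] [Module R M] : ℕ :=
  sInf {n : ℕ | ∃ s : Fin n → M, Submodule.span R (Set.range s) = ⊤}

abbrev ExtVanishes (R : Type u) [CommRing R] (M N : Type u) [AddCommGroup M] [Module R M]
    [AddCommGroup N] [Module R N] (i : ℕ) : Prop :=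
  Subsingleton (((Ext R (ModuleCat.{u} R) i).obj
    (Opposite.op (ModuleCat.of R M))).obj (ModuleCat.of R N))

/-!
Let `t = depth R` and `k = R/𝔪`. By Rees' theorem, `Ext^i(k, X) = 0` for `i < t` whenever
`X ∈ Deep(R)`, while `Ext^t(k, R) ≠ 0`, as otherwise `R` would have a regular sequence of length
`t + 1`. Hence a monomorphism whose cokernel is a finite power of a module in `Deep(R)` is
injective on `Ext^t(k, -)`. In both parts this gives `h : R → Mⁿ` injective on `Ext^t(k, -)`:
in (1) a lift of `f : R → Nⁿ` along `gⁿ`, since `gⁿ ∘ h = f`; in (2) the composite `ιⁿ ∘ f`.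
The same then holds for `R → Mⁿ ↪ (Rᵐ)ⁿ`. If no coordinate of the image of `1` were a unit,
this map would be an `𝔪`-linear combination of maps, hence zero on `Ext(k, -)`, forcing
`Ext^t(k, R) = 0`. A unit coordinate splits off a copy of `R` from `M`.
-/

open CategoryTheory RingTheory.Sequence

namespace CategoryTheory.Abelian.Ext

section Abelian

universe v w
variable {C : Type*} [Category.{v} C] [Abelian C] [HasExt.{w} C]

lemma postcomp_mk₀_injective_of_shortExact {S : ShortComplex C} (hS : S.ShortExact) (L : C)
    {n : ℕ} (hX₃ : ∀ i, i + 1 = n → Subsingleton (Ext L S.X₃ i)) :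
    Function.Injective ((mk₀ S.f).postcomp L (add_zero n)) := by
  have := hS.mono_f
  cases n with
  | zero => exact postcomp_mk₀_injective_of_mono L S.f
  | succ i =>
    have := hX₃ i rfl
    exact (AddCommGrpCat.mono_iff_injective _).mp <|
      (covariant_sequence_exact₁' L hS i (i + 1) rfl).mono_g
        ((AddCommGrpCat.isZero_of_iff_subsingleton.mpr inferInstance).eq_zero_of_src _)

lemma subsingleton_of_iso {L X Y : C} (e : X ≅ Y) {n : ℕ} [Subsingleton (Ext L X n)] :
    Subsingleton (Ext L Y n) where
  allEq y y' := by
    have hy : ∀ z : Ext L Y n,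
        (z.comp (mk₀ e.inv) (add_zero n)).comp (mk₀ e.hom) (add_zero n) = z := fun z ↦ by
      simp [comp_assoc_of_second_deg_zero, mk₀_comp_mk₀]
    rw [← hy y, ← hy y', Subsingleton.elim (y.comp (mk₀ e.inv) (add_zero n))]

end Abelian

section ModuleCat

variable {R : Type u} [CommRing R]

lemma smul_eq_zero_of_mem_annihilator {L M : ModuleCat.{u} R} {n : ℕ} {r : R}
    (hr : r ∈ Module.annihilator R L) (x : Ext L M n) : r • x = 0 := by
  have hL : r • 𝟙 L = 0 := by
    simp [← ModuleCat.lsmul_eq_smul_id, Module.mem_annihilator_iff_lsmul_eq_zero.mp hr]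
  have hx : r • x = (mk₀ (r • 𝟙 L)).comp x (zero_add n) := by simp [mk₀_smul]
  rw [hx, hL, mk₀_zero, zero_comp]

lemma subsingleton_pi (L : ModuleCat.{u} R) (X : Type u) [AddCommGroup X] [Module R X]
    (J : Type) [Fintype J] {n : ℕ} [Subsingleton (Ext L (.of R X) n)] :
    Subsingleton (Ext L (.of R (J → X)) n) := by
  have e := addEquivBiproduct L (Limits.biproduct.isBilimit fun _ : J ↦ ModuleCat.of R X) n
  have : Subsingleton (Ext L (⨁ fun _ : J ↦ ModuleCat.of R X) n) := e.subsingleton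
  exact subsingleton_of_iso (ModuleCat.biproductIsoPi fun _ : J ↦ ModuleCat.of R X)

end ModuleCat

end CategoryTheory.Abelian.Ext

namespace ModuleCat

open Abelian

variable {R : Type u} [CommRing R] {A B C : Type u} [AddCommGroup A] [Module R A]
  [AddCommGroup B] [Module R B] [AddCommGroup C] [Module R C]

noncomputable def extMap (L : ModuleCat.{u} R) (n : ℕ) (f : A →ₗ[R] B) :
    Ext L (.of R A) n →+ Ext L (.of R B) n :=
  (Ext.mk₀ (ofHom f)).postcomp L (add_zero n)

lemma extMap_comp (L : ModuleCat.{u} R) (n : ℕ) (f : A →ₗ[R] B) (g : B →ₗ[R] C) :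
    extMap L n (g ∘ₗ f) = (extMap L n g).comp (extMap L n f) := by
  ext x
  simp [extMap, Ext.mk₀_comp_mk₀]

lemma extMap_injective_of_exact {L : ModuleCat.{u} R} {n : ℕ} {f : A →ₗ[R] B}
    {g : B →ₗ[R] C} (hf : Function.Injective f) (hg : Function.Surjective g)
    (hfg : Function.Exact f g) (hC : ∀ i, i + 1 = n → Subsingleton (Ext L (.of R C) i)) :
    Function.Injective (extMap L n f) :=
  Ext.postcomp_mk₀_injective_of_shortExact
    (shortComplex_shortExact (.mk (ofHom f) (ofHom g) (by ext; exact hfg.apply_apply_eq_zero _))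
      hfg hf hg) L hC

lemma extMap_eq_zero_of_apply_one_mem {L : ModuleCat.{u} R} {I : Ideal R}
    (hI : I ≤ Module.annihilator R L) (n : ℕ) {φ : R →ₗ[R] A}
    (hφ : φ 1 ∈ I • (⊤ : Submodule R A)) : extMap L n φ = 0 := by
  rw [show φ = LinearMap.toSpanSingleton R A (φ 1) from LinearMap.ext_ring (by simp)]
  generalize φ 1 = v at hφ
  refine Submodule.smul_induction_on hφ (fun r hr w _ ↦ ?_) (fun v w hv hw ↦ ?_)
  · have : ofHom (LinearMap.toSpanSingleton R A (r • w)) =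
        r • ofHom (LinearMap.toSpanSingleton R A w) := by
      rw [LinearMap.toSpanSingleton_smul]; rfl
    ext x
    simp [extMap, this, Ext.mk₀_smul, Ext.smul_eq_zero_of_mem_annihilator (hI hr)]
  · ext x
    have hvx := DFunLike.congr_fun hv x
    have hwx := DFunLike.congr_fun hw x
    simp_all [extMap, LinearMap.toSpanSingleton_add, Ext.mk₀_add]

end ModuleCat

lemma Submodule.mem_ideal_smul_top_pi {R : Type*} [CommSemiring R] {I : Ideal R} {A : Type*}
    [AddCommMonoid A] [Module R A] {J : Type*} [Fintype J] {w : J → A}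
    (hw : ∀ j, w j ∈ I • (⊤ : Submodule R A)) : w ∈ I • (⊤ : Submodule R (J → A)) := by
  classical
  rw [← Finset.univ_sum_single w]
  exact Submodule.sum_mem _ fun j _ ↦
    Submodule.smul_top_le_comap_smul_top I (LinearMap.single R (fun _ ↦ A) j) (hw j)

lemma Function.Exact.linearMap_compLeft {R : Type*} [Semiring R] {A B C : Type*}
    [AddCommMonoid A] [Module R A] [AddCommMonoid B] [Module R B] [AddCommMonoid C] [Module R C]
    {f : A →ₗ[R] B} {g : B →ₗ[R] C} (hfg : Function.Exact f g) (J : Type*) :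
    Function.Exact (f.compLeft J) (g.compLeft J) := by
  intro y
  refine ⟨fun hy ↦ ?_, fun ⟨x, hx⟩ ↦ hx ▸ funext fun j ↦ hfg.apply_apply_eq_zero (x j)⟩
  choose x hx using fun j ↦ (hfg (y j)).mp (congrFun hy j)
  exact ⟨x, funext hx⟩

lemma hasFreeSummand_of_isUnit {R : Type u} [CommRing R] {M : Type u} [AddCommGroup M]
    [Module R M] {q : M →ₗ[R] R} {e : M} (he : IsUnit (q e)) : HasFreeSummand R M :=
  ⟨((he.unit⁻¹ : Rˣ) : R) • q, LinearMap.toSpanSingleton R M e, LinearMap.ext_ring (by simp)⟩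

section Depth

open Abelian

variable {R : Type u} [CommRing R] [IsLocalRing R]

variable (R) in
abbrev residueModule : ModuleCat.{u} R := .of R (R ⧸ maximalIdeal R)

lemma support_residueModule :
    Module.support R (residueModule R) = PrimeSpectrum.zeroLocus (maximalIdeal R) := by
  rw [Module.support_eq_zeroLocus, Ideal.annihilator_quotient]

lemma maximalIdeal_smul_top_lt_top (M : Type u) [AddCommGroup M] [Module R M] [Nontrivial M]
    [Module.Finite R M] : maximalIdeal R • (⊤ : Submodule R M) < ⊤ :=
  (Submodule.top_ne_ideal_smul_of_le_jacobson_annihilator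
    (maximalIdeal_le_jacobson _)).symm.lt_top

/-- Unlike `Deep R X`, which fails for `X = 0` unless `depth R = 0` (`rdepth` of `0` is the
supremum of the empty set), this holds for `0` and hence passes to finite powers `J → X`. -/
def ExtDeep (R : Type u) [CommRing R] [IsLocalRing R] (X : Type u) [AddCommGroup X]
    [Module R X] : Prop :=
  ∀ i < rdepth R R, Subsingleton (Ext (residueModule R) (.of R X) i)

lemma ExtDeep.pi {X : Type u} [AddCommGroup X] [Module R X] (hX : ExtDeep R X) (J : Type)
    [Fintype J] : ExtDeep R (J → X) :=
  fun i hi ↦ have := hX i hi; Ext.subsingleton_pi _ X J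

lemma extMap_injective_of_extDeep {A B C : Type u} [AddCommGroup A] [Module R A]
    [AddCommGroup B] [Module R B] [AddCommGroup C] [Module R C] {f : A →ₗ[R] B}
    {g : B →ₗ[R] C} (hf : Function.Injective f) (hg : Function.Surjective g)
    (hfg : Function.Exact f g) (hC : ExtDeep R C) :
    Function.Injective (ModuleCat.extMap (residueModule R) (rdepth R R) f) :=
  ModuleCat.extMap_injective_of_exact hf hg hfg fun i hi ↦ hC i (by omega)

variable [IsNoetherianRing R]

lemma subsingleton_ext_of_lt_rdepth {M : Type u} [AddCommGroup M] [Module R M]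
    [Module.Finite R M] {i : ℕ} (hi : i < rdepth R M) :
    Subsingleton (Ext (residueModule R) (.of R M) i) := by
  obtain ⟨_, ⟨rs, rfl, hmem, hreg⟩, hlt⟩ := exists_lt_of_lt_csSup' hi
  have := hreg.nontrivial
  exact ModuleCat.subsingleton_ext_of_exists_isRegular _ _ support_residueModule.le _
    (maximalIdeal_smul_top_lt_top M) rs hmem hreg i hlt

lemma Deep.extDeep {X : Type u} [AddCommGroup X] [Module R X] (hX : Deep R X) : ExtDeep R X :=
  have := hX.1
  fun _ hi ↦ subsingleton_ext_of_lt_rdepth (hi.trans_le hX.2)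

lemma bddAbove_length_isRegular_self : BddAbove {n : ℕ | ∃ rs : List R, rs.length = n ∧
    (∀ r ∈ rs, r ∈ maximalIdeal R) ∧ IsRegular R rs} := by
  refine ⟨(LTSeries.longestOf (PrimeSpectrum R)).length, ?_⟩
  rintro _ ⟨rs, rfl, -, hreg⟩
  have : Nontrivial (R ⧸ Ideal.ofList rs) :=
    Ideal.Quotient.nontrivial_iff.mpr fun h ↦ hreg.top_ne_smul (by simp [h])
  have h := ringKrullDim_add_length_eq_ringKrullDim_of_isRegular rs hreg
  rw [show ringKrullDim R = (LTSeries.longestOf (PrimeSpectrum R)).length from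
    Order.krullDim_eq_length_of_finiteDimensionalOrder] at h
  exact_mod_cast h ▸ le_add_of_nonneg_left ringKrullDim_nonneg_of_nontrivial

lemma not_subsingleton_ext_rdepth_self :
    ¬ Subsingleton (Ext (residueModule R) (.of R R) (rdepth R R)) := by
  intro h
  obtain ⟨rs, hlen, hmem, hreg⟩ := ModuleCat.exists_isRegular_of_exists_subsingleton_ext
    (maximalIdeal R) (rdepth R R + 1) (.of R R) (maximalIdeal_smul_top_lt_top R) _
    support_residueModule fun i hi ↦ (Nat.lt_succ_iff_lt_or_eq.mp hi).elim
      subsingleton_ext_of_lt_rdepth (· ▸ h)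
  have := le_csSup bddAbove_length_isRegular_self ⟨rs, hlen, hmem, hreg⟩
  exact (rdepth R R).lt_irrefl this

lemma extMap_compLeft_injective_of_deep {A B : Type u} [AddCommGroup A] [Module R A]
    [AddCommGroup B] [Module R B] {f : A →ₗ[R] B} (hf : Function.Injective f)
    (hC : Deep R (B ⧸ LinearMap.range f)) (J : Type) [Fintype J] :
    Function.Injective (ModuleCat.extMap (residueModule R) (rdepth R R) (f.compLeft J)) :=
  extMap_injective_of_extDeep hf.comp_left (Submodule.mkQ_surjective _).comp_left
    ((LinearMap.exact_map_mkQ_range f).linearMap_compLeft J) (hC.extDeep.pi J)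

theorem hasFreeSummand_of_extMap_injective {M : Type u} [AddCommGroup M] [Module R M]
    {m n : ℕ} {ι : M →ₗ[R] (Fin m → R)} (hι : Function.Injective ι)
    (hY : Deep R ((Fin m → R) ⧸ LinearMap.range ι)) {h : R →ₗ[R] (Fin n → M)}
    (hh : Function.Injective (ModuleCat.extMap (residueModule R) (rdepth R R) h)) :
    HasFreeSummand R M := by
  by_contra hfree
  have hv : (ι.compLeft (Fin n) ∘ₗ h) 1 ∈ maximalIdeal R • (⊤ : Submodule R _) :=
    Submodule.mem_ideal_smul_top_pi fun i ↦ Submodule.mem_ideal_smul_top_pi fun j ↦ by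
      have : ι (h 1 i) j ∈ maximalIdeal R := (mem_maximalIdeal _).mpr fun hu ↦
        hfree (hasFreeSummand_of_isUnit (q := LinearMap.proj j ∘ₗ ι) hu)
      simpa using this
  have hinj := (extMap_compLeft_injective_of_deep hι hY (Fin n)).comp hh
  rw [← AddMonoidHom.coe_comp, ← ModuleCat.extMap_comp,
    ModuleCat.extMap_eq_zero_of_apply_one_mem Ideal.annihilator_quotient.ge _ hv] at hinj
  exact not_subsingleton_ext_rdepth_self ⟨fun x y ↦ hinj rfl⟩

end Depth

theorem stmt_5_general (R : Type u) [CommRing R] [IsNoetherianRing R] [IsLocalRing R]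
    (M N : Type u) [AddCommGroup M] [Module R M]
    [AddCommGroup N] [Module R N]
    (hM : OmegaDeep R M) (hN : DF R N) :
    ((∃ g : M →ₗ[R] N, Function.Surjective g) → HasFreeSummand R M) ∧
    ((∃ ι : N →ₗ[R] M, Function.Injective ι ∧ Deep R (M ⧸ LinearMap.range ι)) →
      HasFreeSummand R M) := by
  obtain ⟨m, ι, hι, hY⟩ := hM
  obtain ⟨n, f, hf, hX⟩ := hN
  have hf_ext := extMap_injective_of_extDeep hf (Submodule.mkQ_surjective _)
    (LinearMap.exact_map_mkQ_range f) hX.extDeep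
  refine ⟨fun ⟨g, hg⟩ ↦ ?_, fun ⟨ι', hι', hD⟩ ↦ ?_⟩
  · obtain ⟨w, hw⟩ : ∃ w, g.compLeft (Fin n) w = f 1 := hg.comp_left (f 1)
    have hgw : g.compLeft (Fin n) ∘ₗ LinearMap.toSpanSingleton R _ w = f :=
      LinearMap.ext_ring (by simpa using hw)
    refine hasFreeSummand_of_extMap_injective hι hY (h := LinearMap.toSpanSingleton R _ w) ?_
    rw [← hgw, ModuleCat.extMap_comp, AddMonoidHom.coe_comp] at hf_ext
    exact hf_ext.of_comp
  · refine hasFreeSummand_of_extMap_injective hι hY (h := ι'.compLeft (Fin n) ∘ₗ f) ?_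
    rw [ModuleCat.extMap_comp, AddMonoidHom.coe_comp]
    exact (extMap_compLeft_injective_of_deep hι' hD (Fin n)).comp hf_ext

/-- Suppose `M ∈ ΩDeep(R)` and `N ∈ DF(R)`.
(1) If there is a surjection `M ↠ N`, then `M` has a free direct summand.
(2) If there is a short exact sequence `0 → N → M → X → 0` with `X ∈ Deep(R)`
(equivalently, an injection `ι : N ↪ M` whose cokernel lies in `Deep(R)`),
then `M` has a free direct summand. -/
theorem stmt_5 (R : Type u) [CommRing R] [IsNoetherianRing R] [IsLocalRing R]
    (M N : Type u) [AddCommGroup M] [Module R M] [Module.Finite R M]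
    [AddCommGroup N] [Module R N] [Module.Finite R N]
    (hM : OmegaDeep R M) (hN : DF R N) :
    ((∃ g : M →ₗ[R] N, Function.Surjective g) → HasFreeSummand R M) ∧
    ((∃ ι : N →ₗ[R] M, Function.Injective ι ∧ Deep R (M ⧸ LinearMap.range ι)) →
      HasFreeSummand R M) :=
  stmt_5_general R M N hM hN
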